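/- arXiv:2604.08663 — 3 statements merged into one kernel-verified Lean document; each statement's English description precedes it below -/
import Mathlib

section
/- Let ρ = ½(I + r·σ) be a single-qubit density matrix with Bloch vector r ∈ ℝ³, ‖r‖₂ ≤ 1, let h ∈ ℝ³ with ‖h‖₂ = 1, and set E := h·r. Assume the stabilizer slice {s ∈ ℝ³ : ‖s‖₁ ≤ 1, h·s = E} is nonempty. Then S(ρ) < min{ S(½(I + s·σ)) : ‖s‖₁ ≤ 1, h·s = E } if and only if ‖r‖₂ > R⋆(E), where R⋆(E) := max{ ‖s‖₂ : ‖s‖₁ ≤ 1, h·s = E }. -/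
/-! The entropy of `ρ(r)` depends only on the Bloch radius: `ρ(r)` has trace one and
determinant `(1 - ‖r‖₂²)/4`, so its eigenvalues are `(1 ± ‖r‖₂)/2` and `S(ρ(r)) = H₂((1 + ‖r‖₂)/2)`,
which is strictly decreasing in `‖r‖₂ ∈ [0, 1]`. On the compact slice `‖s‖₂ ≤ ‖s‖₁ ≤ 1`, so the
minimal entropy is attained exactly at the maximal radius `R⋆`, and `S(ρ(r)) < H₂((1 + R⋆)/2)`
is equivalent to `‖r‖₂ > R⋆`. -/

open Matrix BigOperators

noncomputable section

/-- The Pauli X matrix. -/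
def PX : Matrix (Fin 2) (Fin 2) ℂ := !![0, 1; 1, 0]
/-- The Pauli Y matrix. -/
def PY : Matrix (Fin 2) (Fin 2) ℂ := !![0, -Complex.I; Complex.I, 0]
/-- The Pauli Z matrix. -/
def PZ : Matrix (Fin 2) (Fin 2) ℂ := !![1, 0; 0, -1]

/-- The single-qubit state `ρ(r) = ½(I + r·σ)` with Bloch vector `r`. -/
def blochRho (r : Fin 3 → ℝ) : Matrix (Fin 2) (Fin 2) ℂ :=
  (2⁻¹ : ℂ) • (1 + (r 0 : ℂ) • PX + (r 1 : ℂ) • PY + (r 2 : ℂ) • PZ)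

/-- Euclidean norm `‖r‖₂` on `ℝ³`. -/
def norm2 (r : Fin 3 → ℝ) : ℝ := Real.sqrt (∑ i, r i ^ 2)

/-- `ℓ¹` norm `‖r‖₁` on `ℝ³`. -/
def norm1 (r : Fin 3 → ℝ) : ℝ := ∑ i, |r i|

/-- Euclidean inner product on `ℝ³`. -/
def dot3 (h r : Fin 3 → ℝ) : ℝ := ∑ i, h i * r i

/-- Von Neumann entropy `S(ρ) = −tr(ρ log ρ)`, computed via the eigenvalues of a
Hermitian matrix (junk value `0` for non-Hermitian input). -/
def vnEntropy {m : Type} [Fintype m] [DecidableEq m] (ρ : Matrix m m ℂ) : ℝ :=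
  if h : ρ.IsHermitian then ∑ i, Real.negMulLog (h.eigenvalues i) else 0

/-- The binary entropy `H₂(p) = −p log p − (1−p) log (1−p)`. -/
def binEnt (p : ℝ) : ℝ := Real.negMulLog p + Real.negMulLog (1 - p)

/-- The minimal eigenvalue `E_gs(H)` of a matrix. -/
def minEig {m : Type} [Fintype m] [DecidableEq m] (H : Matrix m m ℂ) : ℝ :=
  sInf {E : ℝ | ∃ ψ : m → ℂ, ψ ≠ 0 ∧ H.mulVec ψ = (E : ℂ) • ψ}

open Real Set

lemma eigenvalues_one_eq_one_sub_of_trace_eq_one {A : Matrix (Fin 2) (Fin 2) ℂ}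
    (hA : A.IsHermitian) (htr : A.trace = 1) :
    hA.eigenvalues 1 = 1 - hA.eigenvalues 0 := by
  have h := hA.trace_eq_sum_eigenvalues
  rw [htr, Fin.sum_univ_two] at h
  linarith [show (1 : ℝ) = hA.eigenvalues 0 + hA.eigenvalues 1 by simpa using congrArg Complex.re h]

/-- The spectrum is `(1 ± t)/2`, and `binEntropy` is symmetric about `1/2`. -/
lemma vnEntropy_eq_binEntropy_of_det {A : Matrix (Fin 2) (Fin 2) ℂ} (hA : A.IsHermitian)
    (htr : A.trace = 1) {t : ℝ} (hdet : A.det = ((1 - t ^ 2) / 4 : ℝ)) :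
    vnEntropy A = binEntropy ((1 + t) / 2) := by
  have hμ₁ := eigenvalues_one_eq_one_sub_of_trace_eq_one hA htr
  rw [vnEntropy, dif_pos hA, Fin.sum_univ_two, hμ₁,
    ← binEntropy_eq_negMulLog_add_negMulLog_one_sub]
  set μ := hA.eigenvalues
  have hprod : μ 0 * (1 - μ 0) = (1 - t ^ 2) / 4 := by
    have h := hA.det_eq_prod_eigenvalues
    rw [hdet, Fin.prod_univ_two, ← RCLike.ofReal_mul] at h
    exact hμ₁ ▸ (RCLike.ofReal_inj.mp h).symm
  have hroots : (μ 0 - (1 + t) / 2) * (μ 0 - (1 - t) / 2) = 0 := by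
    linear_combination -hprod
  rcases mul_eq_zero.mp hroots with h | h
  · rw [sub_eq_zero.mp h]
  · rw [sub_eq_zero.mp h, ← binEntropy_one_sub]
    ring_nf

lemma blochRho_eq (r : Fin 3 → ℝ) :
    blochRho r = !![(1 + (r 2 : ℂ)) / 2, (r 0 - r 1 * Complex.I) / 2;
                    (r 0 + r 1 * Complex.I) / 2, (1 - r 2) / 2] := by
  unfold blochRho PX PY PZ
  rw [Matrix.one_fin_two]
  ext i j
  fin_cases i <;> fin_cases j <;> simp <;> ring

lemma blochRho_isHermitian (r : Fin 3 → ℝ) : (blochRho r).IsHermitian := by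
  rw [Matrix.IsHermitian, blochRho_eq]
  ext i j
  fin_cases i <;> fin_cases j <;> simp [Complex.ext_iff]

lemma blochRho_trace (r : Fin 3 → ℝ) : (blochRho r).trace = 1 := by
  rw [blochRho_eq, Matrix.trace_fin_two]
  simp only [Matrix.of_apply, Matrix.cons_val', Matrix.cons_val_zero, Matrix.cons_val_one,
    Matrix.empty_val', Matrix.cons_val_fin_one]
  ring

lemma sq_norm2 (r : Fin 3 → ℝ) : norm2 r ^ 2 = ∑ i, r i ^ 2 :=
  sq_sqrt (by positivity)

lemma blochRho_det (r : Fin 3 → ℝ) :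
    (blochRho r).det = ((1 - norm2 r ^ 2) / 4 : ℝ) := by
  rw [blochRho_eq, Matrix.det_fin_two_of, sq_norm2, Fin.sum_univ_three]
  push_cast
  linear_combination (r 1 : ℂ) ^ 2 / 4 * Complex.I_sq

lemma vnEntropy_blochRho (r : Fin 3 → ℝ) :
    vnEntropy (blochRho r) = binEntropy ((1 + norm2 r) / 2) :=
  vnEntropy_eq_binEntropy_of_det (blochRho_isHermitian r) (blochRho_trace r) (blochRho_det r)

lemma strictAntiOn_binEntropy_one_add_div_two :
    StrictAntiOn (fun t => binEntropy ((1 + t) / 2)) (Icc 0 1) := by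
  intro a ⟨ha0, ha1⟩ b ⟨hb0, hb1⟩ hab
  refine binEntropy_strictAntiOn ⟨?_, ?_⟩ ⟨?_, ?_⟩ ?_ <;> linarith

lemma norm2_le_norm1 (s : Fin 3 → ℝ) : norm2 s ≤ norm1 s := by
  rw [norm2, sqrt_le_left (by unfold norm1; positivity), norm1]
  simp only [Fin.sum_univ_three]
  nlinarith [abs_nonneg (s 0), abs_nonneg (s 1), abs_nonneg (s 2),
    sq_abs (s 0), sq_abs (s 1), sq_abs (s 2)]

lemma norm2_mem_Icc {s : Fin 3 → ℝ} (hs : norm1 s ≤ 1) : norm2 s ∈ Icc 0 1 :=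
  ⟨sqrt_nonneg _, (norm2_le_norm1 s).trans hs⟩

lemma continuous_norm2 : Continuous norm2 := by
  unfold norm2; fun_prop

lemma isCompact_stabilizerSlice (h : Fin 3 → ℝ) (E : ℝ) :
    IsCompact {s : Fin 3 → ℝ | norm1 s ≤ 1 ∧ dot3 h s = E} := by
  refine Metric.isCompact_of_isClosed_isBounded ?_ ((Metric.isBounded_closedBall
    (x := 0) (r := 1)).subset ?_)
  · exact (isClosed_le (by unfold norm1; fun_prop : Continuous norm1) continuous_const).inter
      (isClosed_eq (by unfold dot3; fun_prop : Continuous (dot3 h)) continuous_const)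
  · rintro s ⟨hs, -⟩
    rw [mem_closedBall_zero_iff, pi_norm_le_iff_of_nonneg zero_le_one]
    exact fun i => (Finset.single_le_sum (fun j _ => abs_nonneg (s j))
      (Finset.mem_univ i)).trans hs

theorem heat_detectability_criterion_general (r h : Fin 3 → ℝ) (E : ℝ)
    (hr : norm2 r ≤ 1)
    (hne : {s : Fin 3 → ℝ | norm1 s ≤ 1 ∧ dot3 h s = E}.Nonempty) :
    vnEntropy (blochRho r) <
        sInf ((fun s => vnEntropy (blochRho s)) ''
          {s : Fin 3 → ℝ | norm1 s ≤ 1 ∧ dot3 h s = E}) ↔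
      norm2 r > sSup (norm2 '' {s : Fin 3 → ℝ | norm1 s ≤ 1 ∧ dot3 h s = E}) := by
  set K := {s : Fin 3 → ℝ | norm1 s ≤ 1 ∧ dot3 h s = E}
  have hK : norm2 '' K ⊆ Icc 0 1 := by
    rintro _ ⟨s, hs, rfl⟩
    exact norm2_mem_Icc hs.1
  obtain ⟨R, hR⟩ : ∃ R, IsGreatest (norm2 '' K) R :=
    ((isCompact_stabilizerSlice h E).image continuous_norm2).exists_isGreatest (hne.image _)
  have hmin : IsLeast ((fun s => vnEntropy (blochRho s)) '' K) (binEntropy ((1 + R) / 2)) := by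
    simp only [vnEntropy_blochRho]
    rw [← image_image (fun t => binEntropy ((1 + t) / 2)) norm2]
    exact ((strictAntiOn_binEntropy_one_add_div_two.mono hK).antitoneOn).map_isGreatest hR
  rw [hmin.csInf_eq, hR.csSup_eq, vnEntropy_blochRho]
  exact strictAntiOn_binEntropy_one_add_div_two.lt_iff_gt ⟨sqrt_nonneg _, hr⟩ (hK hR.1)

/-- single-qubit heat-detectability criterion. -/
theorem heat_detectability_criterion (r h : Fin 3 → ℝ) (E : ℝ)
    (hr : norm2 r ≤ 1) (hh : norm2 h = 1) (hE : E = dot3 h r)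
    (hne : {s : Fin 3 → ℝ | norm1 s ≤ 1 ∧ dot3 h s = E}.Nonempty) :
    vnEntropy (blochRho r) <
        sInf ((fun s => vnEntropy (blochRho s)) ''
          {s : Fin 3 → ℝ | norm1 s ≤ 1 ∧ dot3 h s = E}) ↔
      norm2 r > sSup (norm2 '' {s : Fin 3 → ℝ | norm1 s ≤ 1 ∧ dot3 h s = E}) :=
  heat_detectability_criterion_general r h E hr hne
end
end

section
/- For the periodic transverse-field Ising chain on n qubits, H_Ising := −Σ_{j=1}^n (Z_j Z_{j+1} + h X_j) with h > 0 and indices mod n, the stabilizer ground-state energy satisfies E_STAB(H_Ising) = −n·max(1, h). -/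
open Matrix BigOperators

noncomputable section

/-- Operators on the `n`-qubit Hilbert space `(ℂ²)^{⊗n}`. -/
abbrev QOp (n : ℕ) := Matrix (Fin n → Fin 2) (Fin n → Fin 2) ℂ

/-- Vectors in the `n`-qubit Hilbert space. -/
abbrev QVec (n : ℕ) := (Fin n → Fin 2) → ℂ

/-- Tensor product of single-qubit operators, one per site. -/
def tens {n : ℕ} (P : Fin n → Matrix (Fin 2) (Fin 2) ℂ) : QOp n :=
  Matrix.of fun v w => ∏ i, P i (v i) (w i)

/-- An element of the `n`-qubit Pauli group: a phase `±1, ±i` times a tensor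
product of `I, X, Y, Z`. -/
def IsPauli {n : ℕ} (A : QOp n) : Prop :=
  ∃ c : ℂ, (c = 1 ∨ c = -1 ∨ c = Complex.I ∨ c = -Complex.I) ∧
    ∃ P : Fin n → Matrix (Fin 2) (Fin 2) ℂ,
      (∀ i, P i = 1 ∨ P i = PX ∨ P i = PY ∨ P i = PZ) ∧ A = c • tens P

/-- A stabilizer group: an abelian subgroup of the `n`-qubit Pauli group not
containing `-I` (presented as a set of matrices closed under multiplication). -/
structure IsStabGroup {n : ℕ} (S : Set (QOp n)) : Prop where
  pauli : ∀ A ∈ S, IsPauli A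
  one_mem : (1 : QOp n) ∈ S
  mul_mem : ∀ A ∈ S, ∀ B ∈ S, A * B ∈ S
  comm : ∀ A ∈ S, ∀ B ∈ S, A * B = B * A
  neg_one_not_mem : -(1 : QOp n) ∉ S

/-- A maximal (rank-`n`) stabilizer group has `2^n` elements. -/
def IsMaxStabGroup {n : ℕ} (S : Set (QOp n)) : Prop :=
  IsStabGroup S ∧ Nat.card S = 2 ^ n

/-- A pure stabilizer state: a unit vector fixed by every element of some
maximal stabilizer group. -/
def IsPureStab {n : ℕ} (ψ : QVec n) : Prop :=
  star ψ ⬝ᵥ ψ = 1 ∧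
    ∃ S : Set (QOp n), IsMaxStabGroup S ∧ ∀ A ∈ S, A.mulVec ψ = ψ

/-- The projector `|ψ⟩⟨ψ|`. -/
def proj {n : ℕ} (ψ : QVec n) : QOp n := Matrix.vecMulVec ψ (star ψ)

/-- The stabilizer polytope `STAB_n`: the convex hull of the projectors onto
pure stabilizer states. -/
def StabPolytope (n : ℕ) : Set (QOp n) :=
  convexHull ℝ {M : QOp n | ∃ ψ : QVec n, IsPureStab ψ ∧ M = proj ψ}

/-- The stabilizer ground-state energy `E_STAB(H) = min_{ρ ∈ STAB_n} tr(Hρ)`. -/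
def stabEnergy {n : ℕ} (H : QOp n) : ℝ :=
  sInf ((fun ρ => ((H * ρ).trace).re) '' StabPolytope n)

/-- The stabilizer gap `δ_STAB(H) = E_STAB(H) − E_gs(H)`. -/
def stabGap {n : ℕ} (H : QOp n) : ℝ := stabEnergy H - minEig H

/-- The single-site operator `A` acting on qubit `i` (identity elsewhere). -/
def siteOp {n : ℕ} (i : Fin n) (A : Matrix (Fin 2) (Fin 2) ℂ) : QOp n :=
  tens (fun j => if j = i then A else 1)

/-- The periodic transverse-field Ising chain on `n` qubits. -/
def isingChain (n : ℕ) [NeZero n] (h : ℝ) : QOp n :=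
  -∑ j : Fin n, (siteOp j PZ * siteOp (j + 1) PZ + (h : ℂ) • siteOp j PX)

namespace IsingAux

theorem sum_fn_prod {n : ℕ} (f : Fin n → Fin 2 → ℂ) :
    ∑ x : Fin n → Fin 2, ∏ i, f i (x i) = ∏ i, ∑ a, f i a := by
  rw [Finset.prod_univ_sum (fun _ => Finset.univ) f, Fintype.piFinset_univ]

theorem tens_mul {n : ℕ} (P Q : Fin n → Matrix (Fin 2) (Fin 2) ℂ) :
    tens P * tens Q = tens (fun i => P i * Q i) := by
  ext v w
  simp only [tens, Matrix.mul_apply, Matrix.of_apply, ← Finset.prod_mul_distrib]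
  rw [sum_fn_prod (fun i a => P i (v i) a * Q i a (w i))]

theorem tens_one {n : ℕ} : tens (fun _ : Fin n => (1 : Matrix (Fin 2) (Fin 2) ℂ)) = 1 := by
  ext v w
  simp only [tens, Matrix.of_apply, Matrix.one_apply]
  by_cases h : v = w
  · subst h; simp
  · rw [if_neg h]
    obtain ⟨i, hi⟩ := Function.ne_iff.mp h
    exact Finset.prod_eq_zero (Finset.mem_univ i) (by rw [if_neg hi])

theorem tens_trace {n : ℕ} (P : Fin n → Matrix (Fin 2) (Fin 2) ℂ) :
    (tens P).trace = ∏ i, (P i).trace := by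
  simp only [Matrix.trace, Matrix.diag, tens, Matrix.of_apply]
  rw [sum_fn_prod (fun i a => P i a a)]

theorem tens_conjTranspose {n : ℕ} (P : Fin n → Matrix (Fin 2) (Fin 2) ℂ) :
    (tens P)ᴴ = tens (fun i => (P i)ᴴ) := by
  ext v w
  simp [tens, Matrix.conjTranspose_apply, map_prod]

theorem tens_update_smul {n : ℕ} (P : Fin n → Matrix (Fin 2) (Fin 2) ℂ) (j : Fin n)
    (c : ℂ) (M : Matrix (Fin 2) (Fin 2) ℂ) :
    tens (Function.update P j (c • M)) = c • tens (Function.update P j M) := by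
  ext v w
  simp only [tens, Matrix.of_apply, Matrix.smul_apply, smul_eq_mul]
  have key : ∀ N : Matrix (Fin 2) (Fin 2) ℂ,
      (fun i => Function.update P j N i (v i) (w i)) =
      Function.update (fun i => P i (v i) (w i)) j (N (v j) (w j)) := by
    intro N; funext i
    by_cases hi : i = j
    · subst hi; simp
    · simp [Function.update_of_ne hi]
  rw [show (∏ i, Function.update P j (c • M) i (v i) (w i)) =
      ∏ i, Function.update (fun i => P i (v i) (w i)) j ((c • M) (v j) (w j)) i from by rw [key],
    show (∏ i, Function.update P j M i (v i) (w i)) =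
      ∏ i, Function.update (fun i => P i (v i) (w i)) j (M (v j) (w j)) i from by rw [key],
    Finset.prod_update_of_mem (Finset.mem_univ j),
    Finset.prod_update_of_mem (Finset.mem_univ j)]
  simp [mul_assoc]

def isP1 (M : Matrix (Fin 2) (Fin 2) ℂ) : Prop := M = 1 ∨ M = PX ∨ M = PY ∨ M = PZ

theorem pauli_sq {M} (h : isP1 M) : M * M = 1 := by
  rcases h with h|h|h|h <;> subst h <;>
    ext i j <;> fin_cases i <;> fin_cases j <;>
    simp [PX, PY, PZ, Matrix.mul_apply, Fin.sum_univ_two, Matrix.one_apply, Complex.I_mul_I]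

theorem pauli_herm {M} (h : isP1 M) : Mᴴ = M := by
  rcases h with h|h|h|h <;> subst h <;>
    ext i j <;> fin_cases i <;> fin_cases j <;>
    simp [PX, PY, PZ, Matrix.conjTranspose_apply, Matrix.one_apply]

theorem pauli_trace0 {M} (h : M = PX ∨ M = PY ∨ M = PZ) : M.trace = 0 := by
  rcases h with h|h|h <;> subst h <;>
    simp [PX, PY, PZ, Matrix.trace, Matrix.diag, Fin.sum_univ_two]

theorem pauli_trace_mul_ne {M N} (hM : isP1 M) (hN : isP1 N) (hne : M ≠ N) :
    (M * N).trace = 0 := by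
  rcases hM with h|h|h|h <;> rcases hN with g|g|g|g <;> subst h <;> subst g <;>
    first
    | exact absurd rfl hne
    | simp [PX, PY, PZ, Matrix.trace, Matrix.diag, Matrix.mul_apply, Fin.sum_univ_two,
        Matrix.one_apply]

theorem trace_qop_one {n : ℕ} : (1 : QOp n).trace = 2 ^ n := by
  rw [Matrix.trace_one]
  simp

theorem two_pow_ne {n : ℕ} : ((2 : ℂ) ^ n) ≠ 0 := pow_ne_zero _ two_ne_zero

theorem sum_mulVec {n : ℕ} {X : Type*} (F : Finset X) (f : X → QOp n) (x : QVec n) :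
    (∑ A ∈ F, f A).mulVec x = ∑ A ∈ F, (f A).mulVec x := by
  ext v
  simp [Matrix.mulVec, dotProduct, Matrix.sum_apply, Finset.sum_mul, Finset.sum_apply]
  rw [Finset.sum_comm]

theorem trace_mul_proj {n : ℕ} (M : QOp n) (ψ : QVec n) :
    (M * proj ψ).trace = star ψ ⬝ᵥ M.mulVec ψ := by
  simp only [Matrix.trace, Matrix.diag, Matrix.mul_apply, proj, Matrix.vecMulVec_apply,
    dotProduct, Matrix.mulVec, Finset.mul_sum]
  exact Finset.sum_congr rfl fun v _ => Finset.sum_congr rfl fun w _ => by ring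

end IsingAux
namespace IsingAux

variable {n : ℕ} {S : Set (QOp n)} {ψ : QVec n}

theorem stab_repr (hS : IsStabGroup S) {A : QOp n} (hA : A ∈ S) :
    ∃ (ε : ℂ) (P : Fin n → Matrix (Fin 2) (Fin 2) ℂ),
      (ε = 1 ∨ ε = -1) ∧ (∀ i, isP1 (P i)) ∧ A = ε • tens P := by
  obtain ⟨c, hc, P, hP, rfl⟩ := hS.pauli A hA
  have hPP : tens P * tens P = 1 := by
    rw [tens_mul, show (fun i => P i * P i) = fun _ : Fin n => (1 : Matrix (Fin 2) (Fin 2) ℂ)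
      from funext fun i => pauli_sq (hP i), tens_one]
  have hAA : (c • tens P) * (c • tens P) = (c * c) • (1 : QOp n) := by
    rw [Matrix.smul_mul, Matrix.mul_smul, hPP, smul_smul]
  have hmem := hS.mul_mem _ hA _ hA
  rw [hAA] at hmem
  rcases hc with hc | hc | hc | hc
  · exact ⟨c, P, Or.inl hc, hP, rfl⟩
  · exact ⟨c, P, Or.inr hc, hP, rfl⟩
  all_goals {
    exfalso
    apply hS.neg_one_not_mem
    have : c * c = -1 := by rw [hc]; ring_nf; simp [Complex.I_sq]
    rw [this, neg_smul, one_smul] at hmem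
    exact hmem }

theorem stab_sq (hS : IsStabGroup S) {A : QOp n} (hA : A ∈ S) : A * A = 1 := by
  obtain ⟨ε, P, hε, hP, rfl⟩ := stab_repr hS hA
  have hPP : tens P * tens P = 1 := by
    rw [tens_mul, show (fun i => P i * P i) = fun _ : Fin n => (1 : Matrix (Fin 2) (Fin 2) ℂ)
      from funext fun i => pauli_sq (hP i), tens_one]
  rw [Matrix.smul_mul, Matrix.mul_smul, hPP, smul_smul]
  rcases hε with h | h <;> rw [h] <;> norm_num

theorem stab_herm (hS : IsStabGroup S) {A : QOp n} (hA : A ∈ S) : Aᴴ = A := by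
  obtain ⟨ε, P, hε, hP, rfl⟩ := stab_repr hS hA
  rw [Matrix.conjTranspose_smul, tens_conjTranspose,
    show (fun i => (P i)ᴴ) = P from funext fun i => pauli_herm (hP i)]
  rcases hε with h | h <;> subst h <;> simp

theorem stab_trace (hS : IsStabGroup S) {A : QOp n} (hA : A ∈ S) (hne : A ≠ 1) :
    A.trace = 0 := by
  obtain ⟨ε, P, hε, hP, rfl⟩ := stab_repr hS hA
  by_cases hall : ∀ i, P i = 1
  · exfalso
    have h1 : tens P = 1 := by
      rw [show P = fun _ : Fin n => (1 : Matrix (Fin 2) (Fin 2) ℂ) from funext hall, tens_one]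
    rcases hε with h | h
    · exact hne (by rw [h1, h, one_smul])
    · apply hS.neg_one_not_mem
      rw [h1, h, neg_smul, one_smul] at hA
      exact hA
  · push_neg at hall
    obtain ⟨i, hi⟩ := hall
    rw [Matrix.trace_smul, tens_trace, Finset.prod_eq_zero (Finset.mem_univ i), smul_zero]
    apply pauli_trace0
    rcases hP i with h | h | h | h
    · exact absurd h hi
    all_goals tauto

end IsingAux
namespace IsingAux

variable {n : ℕ} {S : Set (QOp n)} {ψ : QVec n}

theorem proj_herm (ψ : QVec n) : (proj ψ)ᴴ = proj ψ := by
  ext v w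
  simp [proj, Matrix.conjTranspose_apply, Matrix.vecMulVec_apply, mul_comm]

theorem proj_idem (hunit : star ψ ⬝ᵥ ψ = 1) : proj ψ * proj ψ = proj ψ := by
  ext v w
  simp only [proj, Matrix.mul_apply, Matrix.vecMulVec_apply]
  calc ∑ u, ψ v * star ψ u * (ψ u * star ψ w)
      = (ψ v * star ψ w) * ∑ u, star ψ u * ψ u := by
        rw [Finset.mul_sum]; exact Finset.sum_congr rfl fun u _ => by ring
    _ = ψ v * star ψ w := by rw [show (∑ u, star ψ u * ψ u) = star ψ ⬝ᵥ ψ from rfl,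
        hunit, mul_one]

theorem proj_trace (hunit : star ψ ⬝ᵥ ψ = 1) : (proj ψ).trace = 1 := by
  rw [← hunit]
  simp only [Matrix.trace, Matrix.diag, proj, Matrix.vecMulVec_apply, dotProduct]
  exact Finset.sum_congr rfl fun v _ => mul_comm _ _

/-- The projector onto a stabilizer state equals the group average. -/
theorem proj_eq_avg (hS : IsStabGroup S) (hcard : Nat.card S = 2 ^ n)
    (hunit : star ψ ⬝ᵥ ψ = 1) (hfix : ∀ A ∈ S, A.mulVec ψ = ψ) :
    ∃ hfin : S.Finite, hfin.toFinset.card = 2 ^ n ∧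
      proj ψ = ((2 : ℂ) ^ n)⁻¹ • ∑ A ∈ hfin.toFinset, A := by
  have hfinite : Finite S := Nat.finite_of_card_ne_zero (by rw [hcard]; positivity)
  have hfin : S.Finite := Set.finite_coe_iff.mp hfinite
  haveI := hfin.fintype
  refine ⟨hfin, ?_, ?_⟩
  · rw [Set.Finite.card_toFinset, ← Nat.card_eq_fintype_card, hcard]
  set F := hfin.toFinset with hF
  have hFcard : F.card = 2 ^ n := by
    rw [hF, Set.Finite.card_toFinset, ← Nat.card_eq_fintype_card, hcard]
  have hmemF : ∀ {A : QOp n}, A ∈ F ↔ A ∈ S := fun {A} => Set.Finite.mem_toFinset hfin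
  set c : ℂ := ((2 : ℂ) ^ n)⁻¹ with hc
  set T : QOp n := ∑ A ∈ F, A with hT
  set Pi : QOp n := c • T with hPi
  have hsumT : ∀ A ∈ F, A * T = T := by
    intro A hA
    rw [hT, Finset.mul_sum]
    refine Finset.sum_bij' (fun B _ => A * B) (fun B _ => A * B) ?_ ?_ ?_ ?_ ?_
    · intro B hB; exact hmemF.mpr (hS.mul_mem _ (hmemF.mp hA) _ (hmemF.mp hB))
    · intro B hB; exact hmemF.mpr (hS.mul_mem _ (hmemF.mp hA) _ (hmemF.mp hB))
    · intro B _
      show A * (A * B) = B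
      rw [← mul_assoc, stab_sq hS (hmemF.mp hA), one_mul]
    · intro B _
      show A * (A * B) = B
      rw [← mul_assoc, stab_sq hS (hmemF.mp hA), one_mul]
    · intro B _; rfl
  have hTT : T * T = (2 ^ n : ℂ) • T := by
    conv_lhs => rw [hT, Finset.sum_mul]
    rw [Finset.sum_congr rfl hsumT, Finset.sum_const, hFcard]
    rw [show ((2:ℕ)^n) • T = ((2^n : ℕ) : ℂ) • T from (Nat.cast_smul_eq_nsmul ℂ _ T).symm]
    norm_num
  have hPiPi : Pi * Pi = Pi := by
    rw [hPi, Matrix.smul_mul, Matrix.mul_smul, hTT, smul_smul, smul_smul, hc]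
    congr 1
    field_simp
  have hPiH : Piᴴ = Pi := by
    rw [hPi, Matrix.conjTranspose_smul, Matrix.conjTranspose_sum]
    congr 1
    · simp [hc]
    · exact Finset.sum_congr rfl fun A hA => stab_herm hS (hmemF.mp hA)
  have hPitr : Pi.trace = 1 := by
    rw [hPi, Matrix.trace_smul, hT, Matrix.trace_sum]
    rw [Finset.sum_eq_single_of_mem (1 : QOp n) (hmemF.mpr hS.one_mem)
      (fun B hB hne => stab_trace hS (hmemF.mp hB) hne), trace_qop_one]
    simp [hc, two_pow_ne]
  have hPiψ : Pi.mulVec ψ = ψ := by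
    show (c • T).mulVec ψ = ψ
    rw [hT, Matrix.smul_mulVec, sum_mulVec F (fun A => A) ψ]
    have h5 : ∑ A ∈ F, (A : QOp n).mulVec ψ = (F.card : ℂ) • ψ := by
      rw [Finset.sum_congr rfl fun A hA => hfix A (hmemF.mp hA), Finset.sum_const,
        ← Nat.cast_smul_eq_nsmul ℂ]
    rw [h5, hFcard, smul_smul, hc]
    norm_num [two_pow_ne]
  have hPiproj : Pi * proj ψ = proj ψ := by
    ext v w
    simp only [Matrix.mul_apply, proj, Matrix.vecMulVec_apply]
    calc ∑ u, Pi v u * (ψ u * star ψ w)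
        = (∑ u, Pi v u * ψ u) * star ψ w := by
          rw [Finset.sum_mul]; exact Finset.sum_congr rfl fun u _ => by ring
      _ = ψ v * star ψ w := by
          rw [show (∑ u, Pi v u * ψ u) = Pi.mulVec ψ v from rfl, hPiψ]
  have hprojPi : proj ψ * Pi = proj ψ := by
    have := congrArg Matrix.conjTranspose hPiproj
    rwa [Matrix.conjTranspose_mul, hPiH, proj_herm] at this
  -- E := Pi - proj is a Hermitian idempotent with trace 0, hence 0
  set E : QOp n := Pi - proj ψ with hE
  have hEH : Eᴴ = E := by rw [hE, Matrix.conjTranspose_sub, hPiH, proj_herm]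
  have hEE : E * E = E := by
    rw [hE, Matrix.sub_mul, Matrix.mul_sub, Matrix.mul_sub, hPiPi, hPiproj, hprojPi,
      proj_idem hunit]
    abel
  have hEtr : E.trace = 0 := by
    rw [hE, Matrix.trace_sub, hPitr, proj_trace hunit, sub_self]
  have hE0 : E = 0 := by
    have h1 : (Eᴴ * E).trace = 0 := by rw [hEH, hEE, hEtr]
    have h2 : ∑ v, ∑ u, Complex.normSq (E u v) = 0 := by
      have : (Eᴴ * E).trace = ((∑ v, ∑ u, Complex.normSq (E u v) : ℝ) : ℂ) := by
        simp only [Matrix.trace, Matrix.diag, Matrix.mul_apply, Matrix.conjTranspose_apply]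
        push_cast
        exact Finset.sum_congr rfl fun v _ => Finset.sum_congr rfl fun u _ => by
          rw [RCLike.star_def, mul_comm, Complex.mul_conj]
      rw [this] at h1
      exact_mod_cast h1
    ext u v
    have hv := (Finset.sum_eq_zero_iff_of_nonneg (fun v _ =>
      Finset.sum_nonneg fun u _ => Complex.normSq_nonneg _)).mp h2 v (Finset.mem_univ v)
    have hu := (Finset.sum_eq_zero_iff_of_nonneg (fun u _ =>
      Complex.normSq_nonneg _)).mp hv u (Finset.mem_univ u)
    simpa using Complex.normSq_eq_zero.mp hu
  have : Pi = proj ψ := by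
    have := sub_eq_zero.mp hE0
    exact this
  rw [← this]

end IsingAux
namespace IsingAux

variable {n : ℕ} {S : Set (QOp n)} {ψ : QVec n}

/-- The expectation of a Hermitian Pauli pattern in a stabilizer state is `0` or `±1`,
and in the latter case `± tens Q` belongs to the group. -/
theorem exp_tens (hS : IsStabGroup S) (hcard : Nat.card S = 2 ^ n)
    (hunit : star ψ ⬝ᵥ ψ = 1) (hfix : ∀ A ∈ S, A.mulVec ψ = ψ)
    {Q : Fin n → Matrix (Fin 2) (Fin 2) ℂ} (hQ : ∀ i, isP1 (Q i)) :
    (tens Q * proj ψ).trace = 0 ∨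
      ∃ ε : ℂ, (ε = 1 ∨ ε = -1) ∧ (tens Q * proj ψ).trace = ε ∧ ε • tens Q ∈ S := by
  obtain ⟨hfin, hFcard, hproj⟩ := proj_eq_avg hS hcard hunit hfix
  set F := hfin.toFinset with hF
  have hmemF : ∀ {A : QOp n}, A ∈ F ↔ A ∈ S := fun {A} => Set.Finite.mem_toFinset hfin
  have hQQ : tens Q * tens Q = 1 := by
    rw [tens_mul, show (fun i => Q i * Q i) = fun _ : Fin n => (1 : Matrix (Fin 2) (Fin 2) ℂ)
      from funext fun i => pauli_sq (hQ i), tens_one]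
  have htr : (tens Q * proj ψ).trace = ((2 : ℂ) ^ n)⁻¹ * ∑ A ∈ F, (tens Q * A).trace := by
    rw [hproj, Matrix.mul_smul, Finset.mul_sum, Matrix.trace_smul, Matrix.trace_sum,
      smul_eq_mul]
  -- terms not proportional to `tens Q` contribute zero
  have hzero : ∀ B ∈ S, (∀ ε' : ℂ, (ε' = 1 ∨ ε' = -1) → B ≠ ε' • tens Q) →
      (tens Q * B).trace = 0 := by
    intro B hB hnot
    obtain ⟨ε', R, hε', hR, rfl⟩ := stab_repr hS hB
    by_cases hall : ∀ i, R i = Q i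
    · exact absurd (by rw [funext hall]) (hnot ε' hε')
    · push_neg at hall
      obtain ⟨i, hi⟩ := hall
      rw [Matrix.mul_smul, Matrix.trace_smul, tens_mul, tens_trace, smul_eq_mul]
      rw [Finset.prod_eq_zero (Finset.mem_univ i)
        (pauli_trace_mul_ne (hQ i) (hR i) (fun hqr => hi (hqr.symm)))]
      ring
  by_cases hex : ∃ ε : ℂ, (ε = 1 ∨ ε = -1) ∧ ε • tens Q ∈ S
  · right
    obtain ⟨ε, hε, hmem⟩ := hex
    refine ⟨ε, hε, ?_, hmem⟩
    have hmain : (tens Q * (ε • tens Q)).trace = ε * 2 ^ n := by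
      rw [Matrix.mul_smul, Matrix.trace_smul, hQQ, trace_qop_one, smul_eq_mul]
    have hsum : ∑ A ∈ F, (tens Q * A).trace = ε * 2 ^ n := by
      rw [Finset.sum_eq_single_of_mem (ε • tens Q) (hmemF.mpr hmem) ?_, hmain]
      intro B hB hne
      apply hzero B (hmemF.mp hB)
      intro ε' hε' hBe
      -- B = ε' • tens Q and B ≠ ε • tens Q, so ε' = -ε and -1 ∈ S
      have hεε : ε' ≠ ε := fun hc => hne (by rw [hBe, hc])
      have hprod : B * (ε • tens Q) = (ε' * ε) • (1 : QOp n) := by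
        rw [hBe, Matrix.smul_mul, Matrix.mul_smul, hQQ, smul_smul]
      have hmemP : B * (ε • tens Q) ∈ S := hS.mul_mem _ (hmemF.mp hB) _ hmem
      rw [hprod] at hmemP
      have : ε' * ε = -1 := by
        rcases hε with h | h <;> rcases hε' with h' | h' <;> subst h <;> subst h' <;>
          first | exact absurd rfl hεε | ring
      rw [this, neg_smul, one_smul] at hmemP
      exact hS.neg_one_not_mem hmemP
    rw [htr, hsum]
    field_simp
  · left
    rw [htr, Finset.sum_eq_zero, mul_zero]
    intro B hB
    apply hzero B (hmemF.mp hB)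
    intro ε' hε' hBe
    exact hex ⟨ε', hε', by rw [← hBe]; exact hmemF.mp hB⟩

end IsingAux
namespace IsingAux

variable {n : ℕ} [NeZero n] {S : Set (QOp n)} {ψ : QVec n}

def ZZpat (j : Fin n) : Fin n → Matrix (Fin 2) (Fin 2) ℂ :=
  fun i => if i = j then PZ else if i = j + 1 then PZ else 1

def Xpat (j : Fin n) : Fin n → Matrix (Fin 2) (Fin 2) ℂ :=
  fun i => if i = j then PX else 1

theorem ZZpat_isP1 (j : Fin n) (i : Fin n) : isP1 (ZZpat j i) := by
  unfold ZZpat isP1; split_ifs <;> tauto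

theorem Xpat_isP1 (j : Fin n) (i : Fin n) : isP1 (Xpat j i) := by
  unfold Xpat isP1; split_ifs <;> tauto

theorem succ_ne {j : Fin n} (hn : 2 ≤ n) : j + 1 ≠ j := by
  intro hc
  have h4 : (1 : ℕ) % n = 1 := Nat.mod_eq_of_lt (by omega)
  have key : (j.val + 1) % n = j.val := by
    simpa [Fin.add_def, Fin.val_one' n, h4] using congrArg Fin.val hc
  have h3 := j.isLt
  rcases Nat.lt_or_ge (j.val + 1) n with hlt | hge
  · have h6 := Nat.mod_eq_of_lt hlt
    omega
  · have h5 : j.val + 1 = n := by omega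
    have h6 : (j.val + 1) % n = 0 := by rw [h5, Nat.mod_self]
    omega

theorem siteZZ {j : Fin n} (hn : 2 ≤ n) :
    siteOp j PZ * siteOp (j + 1) PZ = tens (ZZpat j) := by
  have hfun : (fun i => (if i = j then PZ else 1) * (if i = j + 1 then PZ else 1)) = ZZpat j := by
    funext i
    by_cases h1 : i = j
    · by_cases h2 : i = j + 1
      · exact absurd (h2.symm.trans h1) (succ_ne hn)
      · rw [if_pos h1, if_neg h2, mul_one]
        unfold ZZpat
        rw [if_pos h1]
    · by_cases h2 : i = j + 1
      · rw [if_neg h1, if_pos h2, one_mul]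
        unfold ZZpat
        rw [if_neg h1, if_pos h2]
      · rw [if_neg h1, if_neg h2, one_mul]
        unfold ZZpat
        rw [if_neg h1, if_neg h2]
  show tens (fun k => if k = j then PZ else 1) * tens (fun k => if k = j + 1 then PZ else 1)
      = tens (ZZpat j)
  rw [tens_mul, hfun]

theorem siteX (j : Fin n) : siteOp j PX = tens (Xpat j) := rfl

theorem pat_sq {P : Fin n → Matrix (Fin 2) (Fin 2) ℂ} (hP : ∀ i, isP1 (P i)) :
    tens P * tens P = 1 := by
  rw [tens_mul, show (fun i => P i * P i) = fun _ : Fin n => (1 : Matrix (Fin 2) (Fin 2) ℂ)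
    from funext fun i => pauli_sq (hP i), tens_one]

theorem PXPZ_anti : PX * PZ = -(PZ * PX) := by
  ext a b
  fin_cases a <;> fin_cases b <;>
    simp [PX, PZ, Matrix.mul_apply, Fin.sum_univ_two]

/-- `±Z_jZ_{j+1}` and `±X_j` cannot both lie in an abelian stabilizer group. -/
theorem not_both (hS : IsStabGroup S) {j : Fin n} (hn : 2 ≤ n)
    {εz εx : ℂ} (hεz : εz = 1 ∨ εz = -1) (hεx : εx = 1 ∨ εx = -1)
    (hz : εz • tens (ZZpat j) ∈ S) (hx : εx • tens (Xpat j) ∈ S) : False := by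
  set A : QOp n := tens (ZZpat j) with hA
  set B : QOp n := tens (Xpat j) with hB
  set R : Fin n → Matrix (Fin 2) (Fin 2) ℂ := fun i => ZZpat j i * Xpat j i with hR
  have hAB : A * B = tens R := tens_mul _ _
  have hBA : B * A = -(tens R) := by
    have hR' : (fun i => Xpat j i * ZZpat j i) = Function.update R j ((-1 : ℂ) • R j) := by
      funext i
      by_cases hi : i = j
      · rw [hi, Function.update_self, hR]
        show Xpat j j * ZZpat j j = (-1 : ℂ) • (ZZpat j j * Xpat j j)
        rw [show Xpat j j = PX from if_pos rfl, show ZZpat j j = PZ from if_pos rfl,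
          neg_one_smul, PXPZ_anti]
      · rw [Function.update_of_ne hi, hR]
        simp only [Xpat, ZZpat, if_neg hi]
        rw [one_mul, mul_one]
    rw [hB, hA, tens_mul, hR', tens_update_smul, Function.update_eq_self, neg_one_smul]
  have hcomm := hS.comm _ hz _ hx
  have hcomm2 : (εz * εx) • (A * B) = (εz * εx) • (B * A) := by
    calc (εz * εx) • (A * B) = (εz • A) * (εx • B) := by
          rw [Matrix.smul_mul, Matrix.mul_smul, smul_smul]
      _ = (εx • B) * (εz • A) := hcomm
      _ = (εz * εx) • (B * A) := by
          rw [Matrix.smul_mul, Matrix.mul_smul, smul_smul, mul_comm εx εz]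
  have hne : εz * εx ≠ 0 := by
    rcases hεz with h | h <;> rcases hεx with h' | h' <;> subst h <;> subst h' <;> norm_num
  have hABBA : A * B = B * A := smul_right_injective _ hne hcomm2
  have hR0 : tens R = 0 := by
    have h2 : (2 : ℂ) • tens R = 0 := by
      rw [two_smul]
      nth_rewrite 1 [← hAB]
      rw [hABBA, hBA, ← hAB]
      abel
    exact (smul_eq_zero.mp h2).resolve_left (by norm_num)
  have hone : (1 : QOp n) = 0 := by
    have hprod : (A * B) * (B * A) = 1 := by
      rw [mul_assoc, ← mul_assoc B B A, pat_sq (Xpat_isP1 j), one_mul,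
        pat_sq (ZZpat_isP1 j)]
    rw [hAB, hR0, zero_mul] at hprod
    exact hprod.symm
  have := congrArg (fun M : QOp n => M (fun _ => 0) (fun _ => 0)) hone
  simp [Matrix.one_apply] at this

/-- Per-site expectation bound for stabilizer states. -/
theorem site_bound (hS : IsStabGroup S) (hcard : Nat.card S = 2 ^ n)
    (hunit : star ψ ⬝ᵥ ψ = 1) (hfix : ∀ A ∈ S, A.mulVec ψ = ψ)
    {h : ℝ} (hh : 0 < h) {j : Fin n} (hn : 2 ≤ n) :
    ∃ a b : ℝ, (tens (ZZpat j) * proj ψ).trace = (a : ℂ) ∧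
      (tens (Xpat j) * proj ψ).trace = (b : ℂ) ∧ a + h * b ≤ max 1 h := by
  have hmax1 : (1 : ℝ) ≤ max 1 h := le_max_left 1 h
  have hmaxh : h ≤ max 1 h := le_max_right 1 h
  rcases exp_tens hS hcard hunit hfix (ZZpat_isP1 j) with h0 | ⟨ε, hε, htrv, hmem⟩
  · rcases exp_tens hS hcard hunit hfix (Xpat_isP1 j) with g0 | ⟨δ, hδ, gtrv, gmem⟩
    · exact ⟨0, 0, (by simpa using h0), (by simpa using g0),
        (by simpa using le_trans zero_le_one hmax1)⟩
    · rcases hδ with hd | hd <;> rw [hd] at gtrv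
      · exact ⟨0, 1, (by simpa using h0), (by simpa using gtrv), (by simpa using hmaxh)⟩
      · refine ⟨0, -1, (by simpa using h0), (by push_cast; simpa using gtrv), ?_⟩
        nlinarith
  · rcases exp_tens hS hcard hunit hfix (Xpat_isP1 j) with g0 | ⟨δ, hδ, gtrv, gmem⟩
    · rcases hε with hd | hd <;> rw [hd] at htrv
      · exact ⟨1, 0, (by simpa using htrv), (by simpa using g0), (by simpa using hmax1)⟩
      · refine ⟨-1, 0, (by push_cast; simpa using htrv), (by simpa using g0), ?_⟩
        nlinarith
    · exact (not_both hS hn hε hδ hmem gmem).elim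

end IsingAux
namespace IsingAux

variable {n : ℕ} [NeZero n]

theorem ising_trace (hn : 2 ≤ n) (h : ℝ) (ρ : QOp n) :
    (isingChain n h * ρ).trace =
      -∑ j : Fin n, ((tens (ZZpat j) * ρ).trace + (h : ℂ) * (tens (Xpat j) * ρ).trace) := by
  rw [isingChain, Matrix.neg_mul, Matrix.trace_neg, Finset.sum_mul, Matrix.trace_sum]
  congr 1
  refine Finset.sum_congr rfl fun j _ => ?_
  rw [Matrix.add_mul, Matrix.trace_add, Matrix.smul_mul, Matrix.trace_smul, siteZZ hn,
    siteX, smul_eq_mul]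

/-- Lower bound on the Ising energy of any pure stabilizer state. -/
theorem pure_energy (hn : 2 ≤ n) {h : ℝ} (hh : 0 < h) {ψ : QVec n} (hψ : IsPureStab ψ) :
    -((n : ℝ) * max 1 h) ≤ ((isingChain n h * proj ψ).trace).re := by
  obtain ⟨hunit, S, ⟨hS, hcard⟩, hfix⟩ := hψ
  choose a b ha hb hab using fun j : Fin n =>
    site_bound (ψ := ψ) hS hcard hunit hfix hh (j := j) hn
  have hexp : (isingChain n h * proj ψ).trace = ((-∑ j, (a j + h * b j) : ℝ) : ℂ) := by
    rw [ising_trace hn h (proj ψ),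
      Finset.sum_congr rfl (fun j _ => show _ = ((a j + h * b j : ℝ) : ℂ) from by
        rw [ha j, hb j]; push_cast; ring)]
    push_cast
    ring
  rw [hexp, Complex.ofReal_re]
  have hsum : ∑ j, (a j + h * b j) ≤ ∑ _j : Fin n, max 1 h :=
    Finset.sum_le_sum fun j _ => hab j
  rw [Finset.sum_const, Finset.card_univ, Fintype.card_fin, nsmul_eq_mul] at hsum
  linarith

end IsingAux
namespace IsingAux

variable {n : ℕ} [NeZero n]

theorem PZsq : PZ * PZ = 1 := pauli_sq (Or.inr (Or.inr (Or.inr rfl)))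
theorem PXsq : PX * PX = 1 := pauli_sq (Or.inr (Or.inl rfl))

theorem fin2_eq_one {a : Fin 2} (ha : a ≠ 0) : a = 1 := by
  fin_cases a
  · exact absurd rfl ha
  · rfl

/-- The all-zeros computational basis state. -/
def psi0 : QVec n := fun v => if v = 0 then 1 else 0

theorem psi0_unit : star (psi0 (n := n)) ⬝ᵥ psi0 = 1 := by
  have hterm : ∀ v : Fin n → Fin 2, star (psi0 (n := n) v) * psi0 v
      = if v = 0 then 1 else 0 := by
    intro v; by_cases hv : v = 0 <;> simp [psi0, hv]
  show (∑ v, star (psi0 (n := n) v) * psi0 v) = 1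
  rw [Finset.sum_congr rfl fun v _ => hterm v]
  simp

/-- Patterns of `I` and `Z` fix `psi0`. -/
theorem Zdiag_fix {P : Fin n → Matrix (Fin 2) (Fin 2) ℂ} (hP : ∀ i, P i = 1 ∨ P i = PZ) :
    (tens P).mulVec (psi0 (n := n)) = psi0 := by
  funext v
  have h1 : (tens P).mulVec psi0 v = tens P v 0 := by
    simp only [Matrix.mulVec, dotProduct, psi0, mul_ite, mul_one, mul_zero]
    simp
  rw [h1]
  show (∏ i, P i (v i) 0) = psi0 v
  by_cases hv : v = 0
  · subst hv
    rw [show psi0 (0 : Fin n → Fin 2) = 1 from if_pos rfl]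
    exact Finset.prod_eq_one fun i _ => by
      rcases hP i with h | h <;> rw [h] <;> simp [PZ, Matrix.one_apply]
  · rw [show psi0 v = 0 from if_neg hv]
    obtain ⟨i, hi⟩ := Function.ne_iff.mp hv
    refine Finset.prod_eq_zero (Finset.mem_univ i) ?_
    rw [fin2_eq_one hi]
    rcases hP i with h | h <;> rw [h] <;> simp [PZ, Matrix.one_apply]

def Zelt (f : Fin n → Bool) : QOp n := tens (fun i => if f i then PZ else 1)

def Zgrp : Set (QOp n) := Set.range Zelt

theorem Zelt_mul (f g : Fin n → Bool) :
    Zelt f * Zelt g = Zelt (fun i => xor (f i) (g i)) := by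
  have hfun : (fun i => (if f i then PZ else 1) * (if g i then PZ else 1))
      = (fun i => if xor (f i) (g i) then PZ else (1 : Matrix (Fin 2) (Fin 2) ℂ)) := by
    funext i; cases hf : f i <;> cases hg : g i <;> simp [hf, hg, PZsq]
  rw [Zelt, Zelt, Zelt, tens_mul, hfun]

theorem Zelt_00 (f : Fin n → Bool) : Zelt f (0 : Fin n → Fin 2) 0 = 1 := by
  show (∏ i, (if f i then PZ else 1) ((0 : Fin n → Fin 2) i) ((0 : Fin n → Fin 2) i)) = 1
  exact Finset.prod_eq_one fun i _ => by
    cases hf : f i <;> simp [PZ, Matrix.one_apply]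

theorem Zelt_inj : Function.Injective (Zelt (n := n)) := by
  intro f g hfg
  funext i
  set d : Fin n → Fin 2 := fun k => if k = i then 1 else 0 with hd
  have key : ∀ e : Fin n → Bool, Zelt e d d = if e i then (-1 : ℂ) else 1 := by
    intro e
    show (∏ k, (if e k then PZ else 1) (d k) (d k)) = _
    rw [Finset.prod_eq_single_of_mem i (Finset.mem_univ i)]
    · rw [show d i = 1 from if_pos rfl]
      cases he : e i <;> simp [PZ, Matrix.one_apply]
    · intro k _ hk
      rw [show d k = 0 from if_neg hk]
      cases he : e k <;> simp [PZ, Matrix.one_apply]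
  have h2 : (if f i then (-1 : ℂ) else 1) = (if g i then (-1 : ℂ) else 1) := by
    rw [← key f, ← key g, hfg]
  cases hf : f i <;> cases hg : g i <;> rw [hf, hg] at h2 <;> first | rfl | (exfalso; norm_num at h2)

theorem Zgrp_stab : IsStabGroup (Zgrp (n := n)) := by
  constructor
  · rintro A ⟨f, rfl⟩
    refine ⟨1, Or.inl rfl, fun i => if f i then PZ else 1, fun i => ?_, by rw [one_smul]; rfl⟩
    cases hf : f i
    · exact Or.inl (by show (if f i = true then PZ else 1) = 1; simp [hf])
    · exact Or.inr (Or.inr (Or.inr (by show (if f i = true then PZ else 1) = PZ; simp [hf])))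
  · exact ⟨fun _ => false, by
      rw [Zelt, show (fun i : Fin n => if (false : Bool) then PZ else 1) =
        fun _ : Fin n => (1 : Matrix (Fin 2) (Fin 2) ℂ) from funext fun i => by simp, tens_one]⟩
  · rintro A ⟨f, rfl⟩ B ⟨g, rfl⟩
    exact ⟨fun i => xor (f i) (g i), (Zelt_mul f g).symm⟩
  · rintro A ⟨f, rfl⟩ B ⟨g, rfl⟩
    rw [Zelt_mul, Zelt_mul]
    exact congrArg Zelt (funext fun i => Bool.xor_comm _ _)
  · rintro ⟨f, hf⟩
    have h1 := congrFun (congrFun hf (0 : Fin n → Fin 2)) 0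
    rw [Zelt_00] at h1
    simp [Matrix.one_apply] at h1
    exact (by norm_num : (1 : ℂ) ≠ -1) h1

theorem Zgrp_card : Nat.card (Zgrp (n := n)) = 2 ^ n := by
  have h1 : Nat.card (Zgrp (n := n)) = Nat.card (Fin n → Bool) :=
    Nat.card_congr (Equiv.ofInjective _ Zelt_inj).symm
  rw [h1, Nat.card_eq_fintype_card]
  simp

theorem psi0_pure : IsPureStab (psi0 (n := n)) := by
  refine ⟨psi0_unit, Zgrp, ⟨Zgrp_stab, Zgrp_card⟩, ?_⟩
  rintro A ⟨f, rfl⟩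
  refine Zdiag_fix fun i => ?_
  cases hf : f i
  · exact Or.inl (by simp [hf])
  · exact Or.inr (by simp [hf])

theorem psi0_energyZZ (hn : 2 ≤ n) (j : Fin n) :
    (tens (ZZpat j) * proj (psi0 (n := n))).trace = 1 := by
  rw [trace_mul_proj, Zdiag_fix, psi0_unit]
  intro i
  unfold ZZpat
  split_ifs <;> tauto

theorem psi0_energyX (j : Fin n) :
    (tens (Xpat j) * proj (psi0 (n := n))).trace = 0 := by
  rw [trace_mul_proj]
  have hterm : ∀ v : Fin n → Fin 2, star (psi0 (n := n) v) * (tens (Xpat j)).mulVec psi0 v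
      = if v = 0 then (tens (Xpat j)).mulVec psi0 v else 0 := by
    intro v; by_cases hv : v = 0 <;> simp [psi0, hv]
  have h1 : star (psi0 (n := n)) ⬝ᵥ (tens (Xpat j)).mulVec psi0
      = (tens (Xpat j)).mulVec psi0 0 := by
    show (∑ v, star (psi0 (n := n) v) * (tens (Xpat j)).mulVec psi0 v) = _
    rw [Finset.sum_congr rfl fun v _ => hterm v]
    simp
  rw [h1]
  have h2 : (tens (Xpat j)).mulVec (psi0 (n := n)) 0 = tens (Xpat j) 0 0 := by
    simp only [Matrix.mulVec, dotProduct, psi0, mul_ite, mul_one, mul_zero]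
    simp
  rw [h2]
  show (∏ i, Xpat j i ((0 : Fin n → Fin 2) i) ((0 : Fin n → Fin 2) i)) = 0
  refine Finset.prod_eq_zero (Finset.mem_univ j) ?_
  rw [show Xpat j j = PX from if_pos rfl]
  simp [PX]

theorem psi0_energy (hn : 2 ≤ n) (h : ℝ) :
    ((isingChain n h * proj (psi0 (n := n))).trace).re = -(n : ℝ) := by
  rw [ising_trace hn h]
  rw [Finset.sum_congr rfl (fun j _ => by rw [psi0_energyZZ hn j, psi0_energyX j, mul_zero,
    add_zero])]
  simp

end IsingAux
namespace IsingAux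

variable {n : ℕ} [NeZero n]

/-- The normalization constant `2^{-n/2}`. -/
def c0 (n : ℕ) : ℝ := (Real.sqrt 2)⁻¹ ^ n

theorem c0_sq : (c0 n : ℂ) * (c0 n) = ((2 : ℂ) ^ n)⁻¹ := by
  have hr : c0 n * c0 n = ((2 : ℝ) ^ n)⁻¹ := by
    rw [c0, ← mul_pow, ← mul_inv, Real.mul_self_sqrt (by norm_num), ← inv_pow]
  have h2 := congrArg (fun x : ℝ => (x : ℂ)) hr
  push_cast at h2
  simpa using h2

/-- The uniform-superposition (all `|+⟩`) state. -/
def psiP : QVec n := fun _ => (c0 n : ℂ)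

theorem psiP_unit : star (psiP (n := n)) ⬝ᵥ psiP = 1 := by
  show (∑ _v : Fin n → Fin 2, star ((c0 n : ℂ)) * (c0 n : ℂ)) = 1
  rw [Finset.sum_const, Finset.card_univ,
    show star ((c0 n : ℂ)) = (c0 n : ℂ) from Complex.conj_ofReal _, c0_sq]
  simp only [Fintype.card_pi, Fintype.card_fin, Finset.prod_const, Finset.card_univ,
    Fintype.card_fin]
  rw [nsmul_eq_mul]
  push_cast
  rw [mul_inv_cancel₀ two_pow_ne]

theorem rowsum_one {M : Matrix (Fin 2) (Fin 2) ℂ} (hM : M = 1 ∨ M = PX) (x : Fin 2) :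
    ∑ a, M x a = 1 := by
  rcases hM with rfl | rfl <;> fin_cases x <;>
    simp [PX, Fin.sum_univ_two, Matrix.one_apply]

/-- Patterns of `I` and `X` fix `psiP`. -/
theorem Xrow_fix {P : Fin n → Matrix (Fin 2) (Fin 2) ℂ} (hP : ∀ i, P i = 1 ∨ P i = PX) :
    (tens P).mulVec (psiP (n := n)) = psiP := by
  funext v
  simp only [Matrix.mulVec, dotProduct, tens, Matrix.of_apply, psiP]
  rw [← Finset.sum_mul, sum_fn_prod (fun i a => P i (v i) a),
    Finset.prod_eq_one fun i _ => rowsum_one (hP i) (v i), one_mul]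

/-- Expectation of a tensor operator in `psiP` is the product of total entry sums. -/
theorem psiP_exp (R : Fin n → Matrix (Fin 2) (Fin 2) ℂ) :
    star (psiP (n := n)) ⬝ᵥ (tens R).mulVec psiP
      = ((2 : ℂ) ^ n)⁻¹ * ∏ i, (∑ x, ∑ a, R i x a) := by
  simp only [dotProduct, Matrix.mulVec, tens, Matrix.of_apply, psiP, Pi.star_apply]
  have hstep : ∀ v : Fin n → Fin 2, star ((c0 n : ℂ)) * ∑ w : Fin n → Fin 2, (∏ i, R i (v i) (w i)) * (c0 n : ℂ)
      = ((2 : ℂ) ^ n)⁻¹ * ∏ i, (∑ a, R i (v i) a) := by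
    intro v
    rw [← Finset.sum_mul, sum_fn_prod (fun i a => R i (v i) a),
      show star ((c0 n : ℂ)) = (c0 n : ℂ) from Complex.conj_ofReal _]
    rw [show (c0 n : ℂ) * ((∏ i, ∑ a, R i (v i) a) * (c0 n : ℂ))
        = ((c0 n : ℂ) * (c0 n : ℂ)) * ∏ i, ∑ a, R i (v i) a from by ring, c0_sq]
  rw [Finset.sum_congr rfl fun v _ => hstep v, ← Finset.mul_sum,
    sum_fn_prod (fun i x => ∑ a, R i x a)]

theorem total_PZ : (∑ x : Fin 2, ∑ a : Fin 2, PZ x a) = 0 := by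
  simp [PZ, Fin.sum_univ_two]

theorem total_PX : (∑ x : Fin 2, ∑ a : Fin 2, PX x a) = 2 := by
  norm_num [PX, Fin.sum_univ_two]

theorem total_one : (∑ x : Fin 2, ∑ a : Fin 2, (1 : Matrix (Fin 2) (Fin 2) ℂ) x a) = 2 := by
  norm_num [Matrix.one_apply, Fin.sum_univ_two]

def Xelt (f : Fin n → Bool) : QOp n := tens (fun i => if f i then PX else 1)

def Xgrp : Set (QOp n) := Set.range Xelt

theorem Xelt_mul (f g : Fin n → Bool) :
    Xelt f * Xelt g = Xelt (fun i => xor (f i) (g i)) := by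
  have hfun : (fun i => (if f i then PX else 1) * (if g i then PX else 1))
      = (fun i => if xor (f i) (g i) then PX else (1 : Matrix (Fin 2) (Fin 2) ℂ)) := by
    funext i; cases hf : f i <;> cases hg : g i <;> simp [hf, hg, PXsq]
  rw [Xelt, Xelt, Xelt, tens_mul, hfun]

theorem Xelt_inj : Function.Injective (Xelt (n := n)) := by
  intro f g hfg
  by_contra hne
  obtain ⟨i, hi⟩ := Function.ne_iff.mp hne
  set d : Fin n → Fin 2 := fun k => if f k then 1 else 0 with hd
  have h1 := congrFun (congrFun hfg d) 0
  have hL : Xelt f d (0 : Fin n → Fin 2) = 1 := by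
    show (∏ k, (if f k then PX else 1) (d k) ((0 : Fin n → Fin 2) k)) = 1
    refine Finset.prod_eq_one fun k _ => ?_
    cases hk : f k <;> simp [hd, hk, PX, Matrix.one_apply]
  have hR : Xelt g d (0 : Fin n → Fin 2) = 0 := by
    show (∏ k, (if g k then PX else 1) (d k) ((0 : Fin n → Fin 2) k)) = 0
    refine Finset.prod_eq_zero (Finset.mem_univ i) ?_
    cases hf2 : f i <;> cases hg2 : g i <;>
      first
      | (exfalso; rw [hf2, hg2] at hi; exact hi rfl)
      | simp [hd, hf2, hg2, PX, Matrix.one_apply]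
  rw [hL, hR] at h1
  exact one_ne_zero h1

theorem Xelt_00_ne (f : Fin n → Bool) : Xelt f (0 : Fin n → Fin 2) 0 ≠ -1 := by
  by_cases hf : ∃ i, f i = true
  · obtain ⟨i, hi⟩ := hf
    have : Xelt f (0 : Fin n → Fin 2) 0 = 0 := by
      show (∏ k, (if f k then PX else 1) ((0 : Fin n → Fin 2) k) ((0 : Fin n → Fin 2) k)) = 0
      exact Finset.prod_eq_zero (Finset.mem_univ i) (by simp [hi, PX])
    rw [this]; norm_num
  · push_neg at hf
    have : Xelt f (0 : Fin n → Fin 2) 0 = 1 := by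
      show (∏ k, (if f k then PX else 1) ((0 : Fin n → Fin 2) k) ((0 : Fin n → Fin 2) k)) = 1
      refine Finset.prod_eq_one fun k _ => ?_
      simp [hf k, Matrix.one_apply]
    rw [this]; norm_num

theorem Xgrp_stab : IsStabGroup (Xgrp (n := n)) := by
  constructor
  · rintro A ⟨f, rfl⟩
    refine ⟨1, Or.inl rfl, fun i => if f i then PX else 1, fun i => ?_, by rw [one_smul]; rfl⟩
    cases hf : f i
    · exact Or.inl (by show (if f i = true then PX else 1) = 1; simp [hf])
    · exact Or.inr (Or.inl (by show (if f i = true then PX else 1) = PX; simp [hf]))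
  · exact ⟨fun _ => false, by
      rw [Xelt, show (fun i : Fin n => if (false : Bool) then PX else 1) =
        fun _ : Fin n => (1 : Matrix (Fin 2) (Fin 2) ℂ) from funext fun i => by simp, tens_one]⟩
  · rintro A ⟨f, rfl⟩ B ⟨g, rfl⟩
    exact ⟨fun i => xor (f i) (g i), (Xelt_mul f g).symm⟩
  · rintro A ⟨f, rfl⟩ B ⟨g, rfl⟩
    rw [Xelt_mul, Xelt_mul]
    exact congrArg Xelt (funext fun i => Bool.xor_comm _ _)
  · rintro ⟨f, hf⟩
    have h1 := congrFun (congrFun hf (0 : Fin n → Fin 2)) 0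
    have h2 : (-(1 : QOp n)) (0 : Fin n → Fin 2) 0 = -1 := by
      simp [Matrix.one_apply]
    rw [h2] at h1
    exact Xelt_00_ne f h1

theorem Xgrp_card : Nat.card (Xgrp (n := n)) = 2 ^ n := by
  have h1 : Nat.card (Xgrp (n := n)) = Nat.card (Fin n → Bool) :=
    Nat.card_congr (Equiv.ofInjective _ Xelt_inj).symm
  rw [h1, Nat.card_eq_fintype_card]
  simp

theorem psiP_pure : IsPureStab (psiP (n := n)) := by
  refine ⟨psiP_unit, Xgrp, ⟨Xgrp_stab, Xgrp_card⟩, ?_⟩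
  rintro A ⟨f, rfl⟩
  refine Xrow_fix fun i => ?_
  cases hf : f i
  · exact Or.inl (by simp [hf])
  · exact Or.inr (by simp [hf])

theorem psiP_energyX (j : Fin n) :
    (tens (Xpat j) * proj (psiP (n := n))).trace = 1 := by
  rw [trace_mul_proj, psiP_exp]
  have hfac : ∀ i : Fin n, (∑ x : Fin 2, ∑ a : Fin 2, Xpat j i x a) = 2 := by
    intro i
    by_cases hij : i = j
    · rw [show Xpat j i = PX from by rw [Xpat, if_pos hij]]
      exact total_PX
    · rw [show Xpat j i = 1 from by rw [Xpat, if_neg hij]]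
      exact total_one
  rw [Finset.prod_congr rfl fun i _ => hfac i, Finset.prod_const, Finset.card_univ,
    Fintype.card_fin]
  rw [inv_mul_cancel₀ two_pow_ne]

theorem psiP_energyZZ (j : Fin n) :
    (tens (ZZpat j) * proj (psiP (n := n))).trace = 0 := by
  rw [trace_mul_proj, psiP_exp]
  rw [Finset.prod_eq_zero (Finset.mem_univ j)
    (by rw [show ZZpat j j = PZ from if_pos rfl]; exact total_PZ), mul_zero]

theorem psiP_energy (hn : 2 ≤ n) (h : ℝ) :
    ((isingChain n h * proj (psiP (n := n))).trace).re = -((n : ℝ) * h) := by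
  rw [ising_trace hn h]
  rw [Finset.sum_congr rfl (fun j _ => by
    rw [psiP_energyZZ j, psiP_energyX j, mul_one, zero_add])]
  rw [Finset.sum_const, Finset.card_univ, Fintype.card_fin, nsmul_eq_mul]
  push_cast
  simp

end IsingAux
open IsingAux in
/-- the stabilizer ground-state energy of the periodic
transverse-field Ising chain is `−n·max(1,h)`. -/
theorem ising_stab_energy (n : ℕ) [NeZero n] (hn : 2 ≤ n) (h : ℝ) (hh : 0 < h) :
    stabEnergy (isingChain n h) = -(n : ℝ) * max 1 h := by
  classical
  set lb : ℝ := -(n : ℝ) * max 1 h with hlb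
  set g : QOp n →ₗ[ℝ] ℝ :=
    { toFun := fun ρ => ((isingChain n h * ρ).trace).re
      map_add' := fun ρ σ => by
        show ((isingChain n h * (ρ + σ)).trace).re
            = ((isingChain n h * ρ).trace).re + ((isingChain n h * σ).trace).re
        rw [mul_add, Matrix.trace_add, Complex.add_re]
      map_smul' := fun r ρ => by
        show ((isingChain n h * (r • ρ)).trace).re
            = (RingHom.id ℝ) r • ((isingChain n h * ρ).trace).re
        rw [Matrix.mul_smul, Matrix.trace_smul, RingHom.id_apply]
        simp [Complex.real_smul, Complex.mul_re] } with hg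
  have hglow : ∀ ρ ∈ StabPolytope n, lb ≤ g ρ := by
    intro ρ hρ
    have hsub : StabPolytope n ⊆ {σ : QOp n | lb ≤ g σ} := by
      apply convexHull_min
      · rintro M ⟨ψ, hψ, rfl⟩
        show lb ≤ ((isingChain n h * proj ψ).trace).re
        rw [hlb, neg_mul]
        exact pure_energy hn hh hψ
      · exact (convex_Ici lb).linear_preimage g
    exact hsub hρ
  have hlow : ∀ x ∈ (fun ρ => ((isingChain n h * ρ).trace).re) '' StabPolytope n, lb ≤ x := by
    rintro x ⟨ρ, hρ, rfl⟩
    exact hglow ρ hρ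
  have hmem : lb ∈ (fun ρ => ((isingChain n h * ρ).trace).re) '' StabPolytope n := by
    rcases le_total h 1 with hle | hge
    · refine ⟨proj psi0, subset_convexHull ℝ _ ⟨psi0, psi0_pure, rfl⟩, ?_⟩
      show ((isingChain n h * proj psi0).trace).re = lb
      rw [psi0_energy hn h, hlb, max_eq_left hle, mul_one]
    · refine ⟨proj psiP, subset_convexHull ℝ _ ⟨psiP, psiP_pure, rfl⟩, ?_⟩
      show ((isingChain n h * proj psiP).trace).re = lb
      rw [psiP_energy hn h, hlb, max_eq_right hge, neg_mul]
  show sInf ((fun ρ => ((isingChain n h * ρ).trace).re) '' StabPolytope n) = lb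
  exact le_antisymm (csInf_le ⟨lb, hlow⟩ hmem) (le_csInf ⟨lb, hmem⟩ hlow)
end
end

section
/- Let H be a Hermitian operator on a finite-dimensional complex Hilbert space and β > 0. Define the Gibbs state γ(x) := e^{−xH}/tr(e^{−xH}) for x ∈ ℝ, and the nonequilibrium free energy F(x) := tr(H γ(x)) − β⁻¹ S(γ(x)), where S(ρ) = −tr(ρ log ρ). Then F is differentiable on ℝ with d/dx F(x) = (x/β − 1)·Var_{γ(x)}(H), where Var_{γ(x)}(H) := tr(H² γ(x)) − (tr(H γ(x)))². In particular, if H is not a scalar multiple of the identity, F is strictly decreasing on (−∞, β), attains its unique minimum at x = β, and is strictly increasing on (β, ∞). -/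
open Matrix BigOperators

noncomputable section

/-- The Gibbs state `γ(x) = e^{−xH}/tr(e^{−xH})`. -/
def gibbs {d : ℕ} (H : Matrix (Fin d) (Fin d) ℂ) (x : ℝ) : Matrix (Fin d) (Fin d) ℂ :=
  ((NormedSpace.exp ((-x : ℂ) • H)).trace)⁻¹ • NormedSpace.exp ((-x : ℂ) • H)

/-- The nonequilibrium free energy `F(x) = tr(H γ(x)) − β⁻¹ S(γ(x))`. -/
def freeEnergy {d : ℕ} (H : Matrix (Fin d) (Fin d) ℂ) (β x : ℝ) : ℝ :=
  ((H * gibbs H x).trace).re - β⁻¹ * vnEntropy (gibbs H x)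

/-- The energy variance `Var_{γ(x)}(H) = tr(H² γ(x)) − tr(H γ(x))²`. -/
def varGibbs {d : ℕ} (H : Matrix (Fin d) (Fin d) ℂ) (x : ℝ) : ℝ :=
  ((H * H * gibbs H x).trace).re - (((H * gibbs H x).trace).re) ^ 2

/-!
Diagonalising `H = U diag(E) U*` turns the Gibbs state into `U diag(p) U*` with the Boltzmann
weights `pᵢ = e^{-x Eᵢ} / Z(x)`, `Z(x) = ∑ᵢ e^{-x Eᵢ}`, so everything reduces to the classical
Gibbs distribution on the spectrum: `tr(Hγ) = ⟨E⟩`, `S(γ) = x⟨E⟩ + log Z` and `Var = ⟨E²⟩ - ⟨E⟩²`.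
From `Mₖ' = -Mₖ₊₁` for the moments `Mₖ = ∑ᵢ Eᵢᵏ e^{-x Eᵢ}` one gets `⟨E⟩' = -Var` and
`(log Z)' = -⟨E⟩`, hence `S' = -x Var` and `F' = -Var + x Var / β`. By strict Cauchy–Schwarz the
variance is positive as soon as `H` has two distinct eigenvalues, i.e. is not scalar.
-/

lemma strictAntiOn_Iic_and_strictMonoOn_Ici_of_hasDerivAt {f f' : ℝ → ℝ} {a : ℝ}
    (hf : ∀ x, HasDerivAt f (f' x) x) (hneg : ∀ x < a, f' x < 0) (hpos : ∀ x, a < x → 0 < f' x) :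
    StrictAntiOn f (Set.Iic a) ∧ StrictMonoOn f (Set.Ici a) ∧ ∀ y, y ≠ a → f a < f y := by
  have hcont : Continuous f := continuous_iff_continuousAt.2 fun x => (hf x).continuousAt
  have hanti : StrictAntiOn f (Set.Iic a) :=
    strictAntiOn_of_hasDerivWithinAt_neg (convex_Iic a) hcont.continuousOn
      (fun x _ => (hf x).hasDerivWithinAt) fun x hx => hneg x (by simpa using hx)
  have hmono : StrictMonoOn f (Set.Ici a) :=
    strictMonoOn_of_hasDerivWithinAt_pos (convex_Ici a) hcont.continuousOn
      (fun x _ => (hf x).hasDerivWithinAt) fun x hx => hpos x (by simpa using hx)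
  refine ⟨hanti, hmono, fun y hy => ?_⟩
  rcases hy.lt_or_gt with hlt | hgt
  · exact hanti hlt.le Set.self_mem_Iic hlt
  · exact hmono Set.self_mem_Ici hgt.le hgt

lemma Finset.sq_sum_mul_lt_sum_mul_sum_sq_mul {ι : Type*} [Fintype ι] {w f : ι → ℝ}
    (hw : ∀ i, 0 < w i) {i j : ι} (hij : f i ≠ f j) :
    (∑ k, f k * w k) ^ 2 < (∑ k, w k) * ∑ k, f k ^ 2 * w k := by
  have hZ : 0 < ∑ k, w k := Finset.sum_pos (fun k _ => hw k) ⟨i, Finset.mem_univ i⟩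
  set m := (∑ k, f k * w k) / ∑ k, w k
  have hspread : 0 < ∑ k, w k * (f k - m) ^ 2 := by
    obtain ⟨k, hk⟩ : ∃ k, f k ≠ m := by
      by_contra! h
      exact hij ((h i).trans (h j).symm)
    exact Finset.sum_pos' (fun k _ => mul_nonneg (hw k).le (sq_nonneg _))
      ⟨k, Finset.mem_univ k, mul_pos (hw k) (sq_pos_of_ne_zero (sub_ne_zero.mpr hk))⟩
  have hexpand : ∑ k, w k * (f k - m) ^ 2
      = ∑ k, f k ^ 2 * w k - 2 * m * ∑ k, f k * w k + m ^ 2 * ∑ k, w k := by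
    simp only [Finset.mul_sum, ← Finset.sum_sub_distrib, ← Finset.sum_add_distrib]
    exact Finset.sum_congr rfl fun k _ => by ring
  have hidentity : (∑ k, w k) * ∑ k, w k * (f k - m) ^ 2
      = (∑ k, w k) * ∑ k, f k ^ 2 * w k - (∑ k, f k * w k) ^ 2 := by
    have hm : (∑ k, w k) * m = ∑ k, f k * w k := mul_div_cancel₀ _ hZ.ne'
    rw [hexpand]
    linear_combination ((∑ k, w k) * m - ∑ k, f k * w k) * hm
  simpa only [hidentity, sub_pos] using mul_pos hZ hspread

section GibbsDistribution

variable {ι : Type*} [Fintype ι] (E : ι → ℝ)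

/-- `expMoment E 0` is the partition function `Z`. -/
def expMoment (k : ℕ) (x : ℝ) : ℝ := ∑ i, E i ^ k * Real.exp (-x * E i)

def gibbsWeight (x : ℝ) (i : ι) : ℝ := Real.exp (-x * E i) / expMoment E 0 x

def meanEnergy (x : ℝ) : ℝ := expMoment E 1 x / expMoment E 0 x

def energyVariance (x : ℝ) : ℝ := expMoment E 2 x / expMoment E 0 x - meanEnergy E x ^ 2

lemma expMoment_zero (x : ℝ) : expMoment E 0 x = ∑ i, Real.exp (-x * E i) := by
  simp [expMoment]

lemma hasDerivAt_expMoment (k : ℕ) (x : ℝ) :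
    HasDerivAt (expMoment E k) (-expMoment E (k + 1) x) x := by
  unfold expMoment
  refine (HasDerivAt.fun_sum fun i (_ : i ∈ Finset.univ) =>
    (((hasDerivAt_neg x).mul_const (E i)).exp).const_mul (E i ^ k)).congr_deriv ?_
  rw [← Finset.sum_neg_distrib]
  exact Finset.sum_congr rfl fun i _ => by ring

lemma sum_pow_mul_gibbsWeight (k : ℕ) (x : ℝ) :
    ∑ i, E i ^ k * gibbsWeight E x i = expMoment E k x / expMoment E 0 x := by
  simp only [gibbsWeight, expMoment, Finset.sum_div, mul_div_assoc]

variable [Nonempty ι]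

lemma expMoment_zero_pos (x : ℝ) : 0 < expMoment E 0 x := by
  rw [expMoment_zero]
  exact Finset.sum_pos (fun i _ => Real.exp_pos _) Finset.univ_nonempty

lemma sum_negMulLog_gibbsWeight (x : ℝ) :
    ∑ i, Real.negMulLog (gibbsWeight E x i)
      = x * meanEnergy E x + Real.log (expMoment E 0 x) := by
  have hZ := (expMoment_zero_pos E x).ne'
  have hterm : ∀ i, Real.negMulLog (gibbsWeight E x i)
      = x * (E i ^ 1 * gibbsWeight E x i) + Real.log (expMoment E 0 x) * gibbsWeight E x i := by
    intro i
    rw [Real.negMulLog, gibbsWeight, Real.log_div (Real.exp_ne_zero _) hZ, Real.log_exp]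
    ring
  have hnorm : ∑ i, gibbsWeight E x i = 1 := by
    simpa [hZ] using sum_pow_mul_gibbsWeight E 0 x
  rw [Finset.sum_congr rfl fun i _ => hterm i, Finset.sum_add_distrib, ← Finset.mul_sum,
    ← Finset.mul_sum, hnorm, sum_pow_mul_gibbsWeight, meanEnergy, mul_one]

lemma hasDerivAt_meanEnergy (x : ℝ) :
    HasDerivAt (meanEnergy E) (-energyVariance E x) x := by
  have hZ := (expMoment_zero_pos E x).ne'
  refine ((hasDerivAt_expMoment E 1 x).div (hasDerivAt_expMoment E 0 x) hZ).congr_deriv ?_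
  rw [energyVariance, meanEnergy]
  field_simp
  ring

lemma hasDerivAt_sum_negMulLog_gibbsWeight (x : ℝ) :
    HasDerivAt (fun y => ∑ i, Real.negMulLog (gibbsWeight E y i))
      (-(x * energyVariance E x)) x := by
  have hZ := (expMoment_zero_pos E x).ne'
  simp only [sum_negMulLog_gibbsWeight]
  refine (((hasDerivAt_id x).mul (hasDerivAt_meanEnergy E x)).add
    ((hasDerivAt_expMoment E 0 x).log hZ)).congr_deriv ?_
  rw [id, meanEnergy]
  ring

end GibbsDistribution

lemma energyVariance_pos {ι : Type*} [Fintype ι] {E : ι → ℝ} {i j : ι} (hij : E i ≠ E j)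
    (x : ℝ) : 0 < energyVariance E x := by
  have : Nonempty ι := ⟨i⟩
  have hZ := expMoment_zero_pos E x
  have hCS : expMoment E 1 x ^ 2 < expMoment E 0 x * expMoment E 2 x := by
    simpa [expMoment] using
      Finset.sq_sum_mul_lt_sum_mul_sum_sq_mul (fun k => Real.exp_pos (-x * E k)) hij
  rw [energyVariance, meanEnergy, div_pow, sub_pos, div_lt_div_iff₀ (by positivity) hZ]
  nlinarith

namespace Matrix

open Unitary

variable {n 𝕜 : Type*} [Fintype n] [DecidableEq n] [RCLike 𝕜]

lemma trace_conjStarAlgAut (U : unitary (Matrix n n 𝕜)) (A : Matrix n n 𝕜) :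
    (conjStarAlgAut 𝕜 _ U A).trace = A.trace := by
  rw [conjStarAlgAut_apply, trace_mul_cycle, Unitary.coe_star_mul_self, Matrix.one_mul]

lemma exp_conjStarAlgAut (U : unitary (Matrix n n 𝕜)) (A : Matrix n n 𝕜) :
    NormedSpace.exp (conjStarAlgAut 𝕜 _ U A) = conjStarAlgAut 𝕜 _ U (NormedSpace.exp A) := by
  have hinv : (U : Matrix n n 𝕜)⁻¹ = star (U : Matrix n n 𝕜) :=
    inv_eq_right_inv (Unitary.coe_mul_star_self U)
  simpa only [conjStarAlgAut_apply, hinv] using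
    exp_conj (U : Matrix n n 𝕜) A (Unitary.toUnits U).isUnit

namespace IsHermitian

variable {A : Matrix n n 𝕜} (hA : A.IsHermitian)
include hA

lemma exp_ofReal_smul (t : ℝ) :
    NormedSpace.exp ((t : 𝕜) • A) = conjStarAlgAut 𝕜 _ hA.eigenvectorUnitary
      (diagonal (RCLike.ofReal ∘ fun i => Real.exp (t * hA.eigenvalues i))) := by
  conv_lhs => rw [hA.spectral_theorem]
  rw [← map_smul, exp_conjStarAlgAut, ← diagonal_smul, exp_diagonal]
  congr 2
  ext i
  simp only [Pi.exp_def, Pi.smul_apply, Function.comp_apply, smul_eq_mul]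
  rw [← RCLike.ofReal_mul, ← RCLike.algebraMap_eq_ofReal, ← NormedSpace.algebraMap_exp_comm,
    Real.exp_eq_exp_ℝ]

lemma sum_comp_eigenvalues_of_eq_conj (U : unitary (Matrix n n 𝕜)) (ν : n → ℝ)
    (h : A = conjStarAlgAut 𝕜 _ U (diagonal (RCLike.ofReal ∘ ν)))
    {M : Type*} [AddCommMonoid M] (g : ℝ → M) :
    ∑ i, g (hA.eigenvalues i) = ∑ i, g (ν i) := by
  have hroots : Multiset.map (RCLike.ofReal ∘ hA.eigenvalues) Finset.univ.val
      = Multiset.map ((RCLike.ofReal : ℝ → 𝕜) ∘ ν) Finset.univ.val := by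
    rw [← hA.roots_charpoly_eq_eigenvalues, h, conjStarAlgAut_apply, charpoly_mul_comm,
      ← Matrix.mul_assoc, Unitary.coe_star_mul_self, Matrix.one_mul, charpoly_diagonal,
      Polynomial.roots_prod _ _ (by simp [Finset.prod_ne_zero_iff, Polynomial.X_sub_C_ne_zero])]
    simp
  have hre : Multiset.map hA.eigenvalues Finset.univ.val = Multiset.map ν Finset.univ.val := by
    simpa [Multiset.map_map, Function.comp_def] using congrArg (Multiset.map RCLike.re) hroots
  change (Multiset.map (g ∘ hA.eigenvalues) _).sum = (Multiset.map (g ∘ ν) _).sum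
  rw [← Multiset.map_map, hre, Multiset.map_map]

lemma eq_smul_one_of_eigenvalues_eq (h : ∀ i j, hA.eigenvalues i = hA.eigenvalues j) (i : n) :
    A = (hA.eigenvalues i : 𝕜) • 1 := by
  have hconst : RCLike.ofReal ∘ hA.eigenvalues = fun _ => (hA.eigenvalues i : 𝕜) := by
    ext j
    simp [h j i]
  conv_lhs => rw [hA.spectral_theorem, hconst, ← smul_one_eq_diagonal, map_smul, map_one]

end IsHermitian

end Matrix

section GibbsState

open Unitary

variable {d : ℕ} {H : Matrix (Fin d) (Fin d) ℂ} (hH : H.IsHermitian)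
include hH

lemma gibbs_eq_conjStarAlgAut (x : ℝ) :
    gibbs H x = conjStarAlgAut ℂ _ hH.eigenvectorUnitary
      (diagonal (RCLike.ofReal ∘ gibbsWeight hH.eigenvalues x)) := by
  have hexp : NormedSpace.exp ((-x : ℂ) • H) = conjStarAlgAut ℂ _ hH.eigenvectorUnitary
      (diagonal (RCLike.ofReal ∘ fun i => Real.exp (-x * hH.eigenvalues i))) := by
    rw [← Complex.ofReal_neg]
    exact hH.exp_ofReal_smul (-x)
  have htrace : (NormedSpace.exp ((-x : ℂ) • H)).trace = expMoment hH.eigenvalues 0 x := by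
    rw [hexp, trace_conjStarAlgAut, trace_diagonal, expMoment_zero]
    simp
  rw [gibbs, htrace, hexp, ← map_smul, ← diagonal_smul]
  congr 2
  ext i
  simp [gibbsWeight, div_eq_inv_mul]

lemma isHermitian_gibbs (x : ℝ) : (gibbs H x).IsHermitian := by
  rw [gibbs_eq_conjStarAlgAut hH]
  exact ((isHermitian_diagonal_of_self_adjoint (RCLike.ofReal ∘ gibbsWeight hH.eigenvalues x)
    (by ext; simp)).isSelfAdjoint.map _)

lemma trace_pow_mul_gibbs (k : ℕ) (x : ℝ) :
    (H ^ k * gibbs H x).trace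
      = (expMoment hH.eigenvalues k x / expMoment hH.eigenvalues 0 x : ℝ) := by
  have hdiag : H ^ k * gibbs H x = conjStarAlgAut ℂ _ hH.eigenvectorUnitary
      (diagonal (RCLike.ofReal ∘ hH.eigenvalues) ^ k *
        diagonal (RCLike.ofReal ∘ gibbsWeight hH.eigenvalues x)) := by
    rw [map_mul, map_pow, ← hH.spectral_theorem, gibbs_eq_conjStarAlgAut hH]
  rw [hdiag, trace_conjStarAlgAut, diagonal_pow, diagonal_mul_diagonal, trace_diagonal,
    ← sum_pow_mul_gibbsWeight]
  push_cast
  rfl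

lemma vnEntropy_gibbs (x : ℝ) :
    vnEntropy (gibbs H x) = ∑ i, Real.negMulLog (gibbsWeight hH.eigenvalues x i) := by
  rw [vnEntropy, dif_pos (isHermitian_gibbs hH x)]
  exact (isHermitian_gibbs hH x).sum_comp_eigenvalues_of_eq_conj _ _
    (gibbs_eq_conjStarAlgAut hH x) _

lemma trace_mul_gibbs (x : ℝ) : (H * gibbs H x).trace = meanEnergy hH.eigenvalues x := by
  simpa only [pow_one, meanEnergy] using trace_pow_mul_gibbs hH 1 x

lemma freeEnergy_eq (β x : ℝ) :
    freeEnergy H β x = meanEnergy hH.eigenvalues x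
      - β⁻¹ * ∑ i, Real.negMulLog (gibbsWeight hH.eigenvalues x i) := by
  rw [freeEnergy, vnEntropy_gibbs hH, trace_mul_gibbs hH, Complex.ofReal_re]

lemma varGibbs_eq (x : ℝ) : varGibbs H x = energyVariance hH.eigenvalues x := by
  rw [varGibbs, ← sq, trace_pow_mul_gibbs hH, trace_mul_gibbs hH, Complex.ofReal_re,
    Complex.ofReal_re, energyVariance]

end GibbsState

/-- derivative of the nonequilibrium free energy along the Gibbs
family, and its strict monotonicity/unique minimum at `x = β` for non-scalar
`H`. -/
theorem freeEnergy_deriv {d : ℕ} (hd : 0 < d) (H : Matrix (Fin d) (Fin d) ℂ)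
    (hH : H.IsHermitian) (β : ℝ) (hβ : 0 < β) :
    (∀ x : ℝ, HasDerivAt (fun y => freeEnergy H β y) ((x / β - 1) * varGibbs H x) x) ∧
    ((¬∃ c : ℂ, H = c • (1 : Matrix (Fin d) (Fin d) ℂ)) →
      StrictAntiOn (freeEnergy H β) (Set.Iic β) ∧
      StrictMonoOn (freeEnergy H β) (Set.Ici β) ∧
      ∀ y : ℝ, y ≠ β → freeEnergy H β β < freeEnergy H β y) := by
  have : Nonempty (Fin d) := ⟨⟨0, hd⟩⟩
  have hderiv (x : ℝ) :
      HasDerivAt (fun y => freeEnergy H β y) ((x / β - 1) * varGibbs H x) x := by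
    simp only [freeEnergy_eq hH, varGibbs_eq hH]
    refine ((hasDerivAt_meanEnergy _ x).sub
      ((hasDerivAt_sum_negMulLog_gibbsWeight _ x).const_mul β⁻¹)).congr_deriv ?_
    ring
  refine ⟨hderiv, fun hns => ?_⟩
  obtain ⟨i, j, hij⟩ : ∃ i j, hH.eigenvalues i ≠ hH.eigenvalues j := by
    by_contra! h
    exact hns ⟨_, hH.eq_smul_one_of_eigenvalues_eq h ⟨0, hd⟩⟩
  have hvar (x : ℝ) : 0 < varGibbs H x := varGibbs_eq hH x ▸ energyVariance_pos hij x
  refine strictAntiOn_Iic_and_strictMonoOn_Ici_of_hasDerivAt hderiv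
    (fun x hx => mul_neg_of_neg_of_pos ?_ (hvar x)) (fun x hx => mul_pos ?_ (hvar x))
  · linarith [(div_lt_one hβ).mpr hx]
  · linarith [(one_lt_div hβ).mpr hx]
end
end
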